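/- Let Γ be a cancellation monoid with neutral element e and A = ⊕_{γ∈Γ} A_γ a Γ-graded ring whose degree-e part A_e is a local ring in the classical sense with unique maximal ideal m. Let 𝔐 be the sum of all proper graded two-sided ideals of A. Then 𝔐 ∩ A_e = m. -/
import Mathlib

private lemma locring_nonunits_add {R : Type*} [Ring R] [IsLocalRing R]
    {a b : R} (ha : a ∈ nonunits R) (hb : b ∈ nonunits R) : a + b ∈ nonunits R := by
  rintro ⟨u, hu⟩
  have h1 : a * ↑u⁻¹ + b * ↑u⁻¹ = 1 := by
    rw [← add_mul, ← hu, Units.mul_inv]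
  rcases IsLocalRing.isUnit_or_isUnit_of_add_one h1 with h | h
  · exact ha (by simpa [mul_assoc] using h.mul u.isUnit)
  · exact hb (by simpa [mul_assoc] using h.mul u.isUnit)

private lemma locring_idem {R : Type*} [Ring R] [IsLocalRing R]
    {e : R} (he : e * e = e) : e = 0 ∨ e = 1 := by
  have h1 : e + (1 - e) = 1 := by abel
  rcases IsLocalRing.isUnit_or_isUnit_of_add_one h1 with h | h
  · right
    exact h.mul_left_cancel (by rw [he, mul_one])
  · left
    refine h.mul_left_cancel ?_
    rw [mul_zero, sub_mul, one_mul, he, sub_self]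

private lemma locring_isUnit_of_left_inv {R : Type*} [Ring R] [IsLocalRing R]
    {x d : R} (h : d * x = 1) : IsUnit x := by
  have hid : (x * d) * (x * d) = x * d := by
    rw [mul_assoc x d, ← mul_assoc d, h, one_mul]
  rcases locring_idem hid with h0 | h1
  · exfalso
    have hx : x = 0 := by
      have : (x * d) * x = x := by rw [mul_assoc, h, mul_one]
      rw [h0, zero_mul] at this
      exact this.symm
    rw [hx, mul_zero] at h
    exact one_ne_zero h.symm
  · exact ⟨⟨x, d, h1, h⟩, rfl⟩

section

variable {Γ : Type*} [AddCancelMonoid Γ] [DecidableEq Γ]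
variable {A : Type*} [Ring A] (𝒜 : Γ → AddSubgroup A) [GradedRing 𝒜]

/-- A two-sided ideal of `A` is graded if it contains all homogeneous components of each
of its elements (equivalently, it is generated by homogeneous elements). -/
def TwoSidedIdeal.IsGraded (I : TwoSidedIdeal A) : Prop :=
  ∀ a ∈ I, ∀ γ : Γ, (DirectSum.decompose 𝒜 a γ : A) ∈ I

/-- The degree-`γ` projection as an additive monoid hom `A →+ A`. -/
private def projHom (γ : Γ) : A →+ A :=
  AddMonoidHom.mk' (fun y => (DirectSum.decompose 𝒜 y γ : A)) (fun y z => by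
    simp [DirectSum.decompose_add])

private lemma projHom_apply (γ : Γ) (y : A) :
    projHom 𝒜 γ y = (DirectSum.decompose 𝒜 y γ : A) := rfl

section Local

variable [IsLocalRing (𝒜 0)]

/-- The set of degree-zero elements that are nonunits of `𝒜 0`, as an additive
subgroup of `A`. -/
private def mS : AddSubgroup A where
  carrier := {y : A | ∃ z : 𝒜 0, z ∈ nonunits (𝒜 0) ∧ (z : A) = y}
  zero_mem' := ⟨0, fun h => one_ne_zero (isUnit_zero_iff.mp h).symm, rfl⟩
  add_mem' := by
    rintro _ _ ⟨z, hz, rfl⟩ ⟨w, hw, rfl⟩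
    exact ⟨z + w, locring_nonunits_add hz hw, rfl⟩
  neg_mem' := by
    rintro _ ⟨z, hz, rfl⟩
    exact ⟨-z, fun h => hz (by simpa using h.neg), rfl⟩

/-- Key algebraic lemma: a "conjugate" `a * x * b` of degree zero of a nonunit
`x ∈ 𝒜 0`, with `a, b` homogeneous of complementary degrees, is again a nonunit. -/
private lemma key_mem {γ₁ γ₂ : Γ} (h0 : γ₁ + γ₂ = 0) {a b : A} (ha : a ∈ 𝒜 γ₁)
    (hb : b ∈ 𝒜 γ₂) {x : 𝒜 0} (hx : x ∈ nonunits (𝒜 0)) :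
    a * (x : A) * b ∈ mS 𝒜 := by
  have h0' : γ₂ + γ₁ = 0 := by
    apply add_left_cancel (a := γ₁)
    rw [← add_assoc, h0, zero_add, add_zero]
  have hmem : a * (x : A) * b ∈ 𝒜 0 := by
    have := SetLike.mul_mem_graded (SetLike.mul_mem_graded ha x.2) hb
    simpa [h0] using this
  refine ⟨⟨_, hmem⟩, ?_, rfl⟩
  rintro ⟨u, hu⟩
  set w : 𝒜 0 := ((u⁻¹ : (𝒜 0)ˣ) : 𝒜 0) with hwdef
  have hA2 : (w : A) * (a * (x : A) * b) = 1 := by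
    have h := u.inv_mul
    rw [hu] at h
    exact congrArg Subtype.val h
  have hZ : ∀ Z : A, (w : A) * (a * ((x : A) * (b * Z))) = Z := by
    intro Z
    rw [show (w : A) * (a * ((x : A) * (b * Z))) = ((w : A) * (a * (x : A) * b)) * Z by
      simp only [mul_assoc], hA2, one_mul]
  set e : A := b * ((w : A) * (a * (x : A))) with he_def
  have hee : e * e = e := by
    calc e * e = b * ((w : A) * (a * ((x : A) * (b * ((w : A) * (a * (x : A))))))) := by
          simp only [he_def, mul_assoc]
    _ = e := by rw [hZ]
  have he0 : e ∈ 𝒜 0 := by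
    have := SetLike.mul_mem_graded hb
      (SetLike.mul_mem_graded w.2 (SetLike.mul_mem_graded ha x.2))
    simpa [h0'] using this
  have hEE : (⟨e, he0⟩ * ⟨e, he0⟩ : 𝒜 0) = ⟨e, he0⟩ := Subtype.ext hee
  rcases locring_idem hEE with hE0 | hE1
  · -- e = 0 forces b = 0, hence the unit u is 0, contradiction
    have he0' : e = 0 := congrArg Subtype.val hE0
    have heb : e * b = b := by
      calc e * b = b * ((w : A) * (a * (x : A) * b)) := by simp only [he_def, mul_assoc]
      _ = b := by rw [hA2, mul_one]
    have hb0 : b = 0 := by rw [← heb, he0', zero_mul]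
    have hz : (⟨a * (x : A) * b, hmem⟩ : 𝒜 0) = 0 :=
      Subtype.ext (by show a * (x : A) * b = 0; rw [hb0, mul_zero])
    rw [hz] at hu
    exact one_ne_zero (isUnit_zero_iff.mp (hu ▸ u.isUnit)).symm
  · -- e = 1 gives a left inverse of x, contradiction with x nonunit
    have he1 : e = 1 := congrArg Subtype.val hE1
    have hc : b * ((w : A) * a) ∈ 𝒜 0 := by
      have := SetLike.mul_mem_graded hb (SetLike.mul_mem_graded w.2 ha)
      simpa [h0'] using this
    have hCx : (⟨b * ((w : A) * a), hc⟩ * x : 𝒜 0) = 1 := by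
      refine Subtype.ext ?_
      show (b * ((w : A) * a)) * (x : A) = 1
      rw [← he1, he_def]
      simp only [mul_assoc]
    exact hx (locring_isUnit_of_left_inv hCx)

/-- Decomposition of a generator `a * x * b` into homogeneous pieces lands in any
additive subgroup containing all the homogeneous pieces of appropriate degrees. -/
private lemma decompose_generator_mem (S : AddSubgroup A) (x : 𝒜 0) (γ : Γ)
    (h : ∀ γ₁ γ₂ (a' b' : A), a' ∈ 𝒜 γ₁ → b' ∈ 𝒜 γ₂ → γ₁ + γ₂ = γ →
      a' * (x : A) * b' ∈ S)
    (a b : A) : (DirectSum.decompose 𝒜 (a * (x : A) * b) γ : A) ∈ S := by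
  classical
  have expand : a * (x : A) * b =
      ∑ γ₁ ∈ (DirectSum.decompose 𝒜 a).support,
        ∑ γ₂ ∈ (DirectSum.decompose 𝒜 b).support,
          (DirectSum.decompose 𝒜 a γ₁ : A) * (x : A) * (DirectSum.decompose 𝒜 b γ₂ : A) := by
    conv_lhs => rw [← DirectSum.sum_support_decompose 𝒜 a,
      ← DirectSum.sum_support_decompose 𝒜 b]
    rw [Finset.sum_mul, Finset.sum_mul_sum]
  show projHom 𝒜 γ (a * (x : A) * b) ∈ S
  rw [expand, map_sum]
  refine AddSubgroup.sum_mem S fun γ₁ _ => ?_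
  rw [map_sum]
  refine AddSubgroup.sum_mem S fun γ₂ _ => ?_
  have tm : (DirectSum.decompose 𝒜 a γ₁ : A) * (x : A) * (DirectSum.decompose 𝒜 b γ₂ : A)
      ∈ 𝒜 (γ₁ + γ₂) := by
    have := SetLike.mul_mem_graded
      (SetLike.mul_mem_graded (SetLike.coe_mem (DirectSum.decompose 𝒜 a γ₁)) x.2)
      (SetLike.coe_mem (DirectSum.decompose 𝒜 b γ₂))
    simpa using this
  by_cases hd : γ₁ + γ₂ = γ
  · rw [projHom_apply, DirectSum.decompose_of_mem_same 𝒜 (hd ▸ tm)]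
    exact h γ₁ γ₂ _ _ (SetLike.coe_mem _) (SetLike.coe_mem _) hd
  · rw [projHom_apply, DirectSum.decompose_of_mem_ne 𝒜 tm hd]
    exact S.zero_mem

end Local

/-- **Proposition 2.3(vi).**  Let `A` be a `Γ`-graded ring whose degree-`0` part `A_0` is a
local ring in the classical sense with unique maximal ideal `m` (consisting exactly of the
non-units of `A_0`), and let `𝔐` be the sum of all proper graded two-sided ideals of `A`.
Then `𝔐 ∩ A_0 = m`. -/
theorem sSup_proper_graded_inter_degree_zero_eq_maximalIdeal [IsLocalRing (𝒜 0)] :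
    ∀ x : 𝒜 0,
      (x : A) ∈ sSup {I : TwoSidedIdeal A | TwoSidedIdeal.IsGraded 𝒜 I ∧ I ≠ ⊤} ↔
        x ∈ nonunits (𝒜 0) := by
  classical
  intro x
  constructor
  · intro hx
    -- the big two-sided ideal J dominating every proper graded ideal
    set J : TwoSidedIdeal A := TwoSidedIdeal.mk'
      {y : A | ∀ a b : A, (DirectSum.decompose 𝒜 (a * y * b) 0 : A) ∈ mS 𝒜}
      (by intro a b; simpa using (mS 𝒜).zero_mem)
      (by
        intro y z hy hz a b
        have h : a * (y + z) * b = a * y * b + a * z * b := by noncomm_ring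
        show projHom 𝒜 0 (a * (y + z) * b) ∈ mS 𝒜
        rw [h, map_add]
        exact (mS 𝒜).add_mem (hy a b) (hz a b))
      (by
        intro y hy a b
        have h : a * (-y) * b = -(a * y * b) := by noncomm_ring
        show projHom 𝒜 0 (a * (-y) * b) ∈ mS 𝒜
        rw [h, map_neg]
        exact (mS 𝒜).neg_mem (hy a b))
      (by
        intro c y hy a b
        have h : a * (c * y) * b = (a * c) * y * b := by noncomm_ring
        rw [h]
        exact hy (a * c) b)
      (by
        intro y c hy a b
        have h : a * (y * c) * b = a * y * (c * b) := by noncomm_ring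
        rw [h]
        exact hy a (c * b)) with hJdef
    have hle : sSup {I : TwoSidedIdeal A | TwoSidedIdeal.IsGraded 𝒜 I ∧ I ≠ ⊤} ≤ J := by
      refine sSup_le ?_
      rintro I ⟨hg, hne⟩ y hy
      rw [hJdef, TwoSidedIdeal.mem_mk']
      intro a b
      have hyI : a * y * b ∈ I := I.mul_mem_right _ _ (I.mul_mem_left _ _ hy)
      have hzI : (DirectSum.decompose 𝒜 (a * y * b) 0 : A) ∈ I := hg _ hyI 0
      refine ⟨DirectSum.decompose 𝒜 (a * y * b) 0, ?_, rfl⟩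
      rintro ⟨v, hv⟩
      refine hne (I.eq_top ?_)
      have h2 : ((DirectSum.decompose 𝒜 (a * y * b) 0 : 𝒜 0) *
          ((v⁻¹ : (𝒜 0)ˣ) : 𝒜 0) : 𝒜 0) = 1 := by
        rw [← hv]; exact v.mul_inv
      have h1 : (1 : A) = (DirectSum.decompose 𝒜 (a * y * b) 0 : A) *
          (((v⁻¹ : (𝒜 0)ˣ) : 𝒜 0) : A) := (congrArg Subtype.val h2).symm
      rw [h1]
      exact I.mul_mem_right _ _ hzI
    have hxJ : (x : A) ∈ J := hle hx
    rw [hJdef, TwoSidedIdeal.mem_mk'] at hxJ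
    have := hxJ 1 1
    rw [one_mul, mul_one, DirectSum.decompose_of_mem_same 𝒜 x.2] at this
    obtain ⟨z, hz, hzx⟩ := this
    rwa [← Subtype.coe_injective hzx]
  · intro hx
    set T : Set A := {y | ∃ a b : A, y = a * (x : A) * b} with hTdef
    set C := AddSubgroup.closure T with hCdef
    have hTC : T ⊆ C := AddSubgroup.subset_closure
    have hmull : ∀ (c : A) {y}, y ∈ C → c * y ∈ C := by
      intro c y hy
      refine AddSubgroup.closure_induction ?_ ?_ ?_ ?_ hy
      · rintro _ ⟨a, b, rfl⟩
        exact hTC ⟨c * a, b, by simp [mul_assoc]⟩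
      · rw [mul_zero]; exact C.zero_mem
      · intro u v _ _ hu hv
        rw [mul_add]; exact C.add_mem hu hv
      · intro u _ hu
        rw [mul_neg]; exact C.neg_mem hu
    have hmulr : ∀ (c : A) {y}, y ∈ C → y * c ∈ C := by
      intro c y hy
      refine AddSubgroup.closure_induction ?_ ?_ ?_ ?_ hy
      · rintro _ ⟨a, b, rfl⟩
        exact hTC ⟨a, b * c, by simp [mul_assoc]⟩
      · rw [zero_mul]; exact C.zero_mem
      · intro u v _ _ hu hv
        rw [add_mul]; exact C.add_mem hu hv
      · intro u _ hu
        rw [neg_mul]; exact C.neg_mem hu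
    set I : TwoSidedIdeal A := TwoSidedIdeal.mk' C C.zero_mem
      (fun h1 h2 => C.add_mem h1 h2) (fun h1 => C.neg_mem h1)
      (fun h1 => hmull _ h1) (fun h1 => hmulr _ h1) with hIdef
    have hxI : (x : A) ∈ I := by
      rw [hIdef, TwoSidedIdeal.mem_mk']
      exact hTC ⟨1, 1, by rw [one_mul, mul_one]⟩
    have hdec : ∀ (S : AddSubgroup A) (γ : Γ),
        (∀ γ₁ γ₂ (a' b' : A), a' ∈ 𝒜 γ₁ → b' ∈ 𝒜 γ₂ → γ₁ + γ₂ = γ →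
          a' * (x : A) * b' ∈ S) →
        ∀ {y}, y ∈ C → (DirectSum.decompose 𝒜 y γ : A) ∈ S := by
      intro S γ hS y hy
      refine AddSubgroup.closure_induction ?_ ?_ ?_ ?_ hy
      · rintro _ ⟨a, b, rfl⟩
        exact decompose_generator_mem 𝒜 S x γ hS a b
      · show projHom 𝒜 γ 0 ∈ S
        rw [map_zero]; exact S.zero_mem
      · intro u v _ _ hu hv
        show projHom 𝒜 γ (u + v) ∈ S
        rw [map_add]; exact S.add_mem hu hv
      · intro u _ hu
        show projHom 𝒜 γ (-u) ∈ S
        rw [map_neg]; exact S.neg_mem hu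
    have hgraded : TwoSidedIdeal.IsGraded 𝒜 I := by
      intro y hy γ
      rw [hIdef, TwoSidedIdeal.mem_mk'] at hy ⊢
      exact hdec C γ (fun γ₁ γ₂ a' b' _ _ _ => hTC ⟨a', b', rfl⟩) hy
    have hne : I ≠ ⊤ := by
      intro htop
      have h1 : (1 : A) ∈ C := by
        have : (1 : A) ∈ I := htop ▸ TwoSidedIdeal.mem_top A
        rwa [hIdef, TwoSidedIdeal.mem_mk'] at this
      have hm : (DirectSum.decompose 𝒜 (1 : A) 0 : A) ∈ mS 𝒜 :=
        hdec (mS 𝒜) 0 (fun γ₁ γ₂ a' b' ha' hb' hd => key_mem 𝒜 hd ha' hb' hx) h1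
      rw [DirectSum.decompose_of_mem_same 𝒜 (SetLike.one_mem_graded 𝒜)] at hm
      obtain ⟨z, hz, hz1⟩ := hm
      have : z = 1 := Subtype.coe_injective
        (show (z : A) = ((1 : 𝒜 0) : A) by rw [hz1]; rfl)
      exact hz (this ▸ isUnit_one)
    have hmemS : I ∈ {I : TwoSidedIdeal A | TwoSidedIdeal.IsGraded 𝒜 I ∧ I ≠ ⊤} :=
      ⟨hgraded, hne⟩
    exact le_sSup hmemS hxI

end
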